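/- arXiv:1908.10159 — 2 statements merged into one kernel-verified Lean document; each statement's English description precedes it below -/
import Mathlib

section
/- The Fenwick ranges along the sum sequence of i partition the interval [1, i]: if s 0 = i, s (j+1) = s j - 2^(rmb (s j)), and r = popcount i, then the half-open intervals (s (j+1), s j] for j = 0, ..., r-1 are pairwise disjoint and their union is the set {1, 2, ..., i}. -/
/-- Position of the least significant set bit of a positive natural. -/
def rmb (i : ℕ) : ℕ := padicValNat 2 i

/-- Number of 1-bits in the binary representation. -/
def popcount (i : ℕ) : ℕ := (Nat.bits i).count true

/-- One step of the sum sequence: clear the lowest set bit. -/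
def sumStep (x : ℕ) : ℕ := x - 2 ^ rmb x

/-- The sum sequence of `i`. -/
def sumSeq (i j : ℕ) : ℕ := sumStep^[j] i

/-- One step of the update sequence. -/
def updStep (x : ℕ) : ℕ := x + 2 ^ rmb x

/-- The update sequence of `i`. -/
def updSeq (i j : ℕ) : ℕ := updStep^[j] i

/-- The Fenwick array of `A`: entry `k` sums `A` over `(k - 2^(rmb k), k]`. -/
def fenwick (A : ℕ → ℤ) (k : ℕ) : ℤ := ∑ m ∈ Finset.Ioc (k - 2 ^ rmb k) k, A m

/-!
Clearing the lowest set bit lowers the popcount by one, so after `popcount i` steps the sum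
sequence reaches `0`. Being antitone, it cuts `(0, i]` into the consecutive ranges
`(s (j+1), s j]`, which are therefore disjoint and cover `[1, i]`.
-/

open Finset

namespace Antitone

variable {α : Type*} [LinearOrder α] [LocallyFiniteOrder α] {f : ℕ → α}

theorem biUnion_range_Ioc_succ (hf : Antitone f) (n : ℕ) :
    (range n).biUnion (fun j => Ioc (f (j + 1)) (f j)) = Ioc (f n) (f 0) := by
  induction n with
  | zero => simp
  | succ n ih =>
    rw [range_add_one, biUnion_insert, ih,
      Ioc_union_Ioc_eq_Ioc (hf n.le_succ) (hf n.zero_le)]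

theorem disjoint_Ioc_succ_of_ne (hf : Antitone f) {j₁ j₂ : ℕ} (h : j₁ ≠ j₂) :
    Disjoint (Ioc (f (j₁ + 1)) (f j₁)) (Ioc (f (j₂ + 1)) (f j₂)) := by
  simpa [Function.onFun, ← coe_Ioc, disjoint_coe] using hf.pairwise_disjoint_on_Ioc_succ h

end Antitone

lemma popcount_two_mul (k : ℕ) : popcount (2 * k) = popcount k := by
  rcases Nat.eq_zero_or_pos k with rfl | hk
  · rfl
  · simp [popcount, Nat.bit0_bits k hk.ne']

lemma popcount_two_mul_add_one (k : ℕ) : popcount (2 * k + 1) = popcount k + 1 := by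
  simp [popcount]

lemma rmb_two_mul {k : ℕ} (hk : k ≠ 0) : rmb (2 * k) = rmb k + 1 := by
  rw [rmb, rmb, padicValNat.mul two_ne_zero hk, padicValNat.self one_lt_two, add_comm]

lemma rmb_two_mul_add_one (k : ℕ) : rmb (2 * k + 1) = 0 :=
  padicValNat.eq_zero_of_not_dvd (by omega)

lemma two_pow_rmb_le {x : ℕ} (hx : x ≠ 0) : 2 ^ rmb x ≤ x :=
  Nat.le_of_dvd (Nat.pos_of_ne_zero hx) pow_padicValNat_dvd

lemma sumStep_lt {x : ℕ} (hx : x ≠ 0) : sumStep x < x :=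
  Nat.sub_lt (Nat.pos_of_ne_zero hx) (Nat.two_pow_pos _)

lemma sumStep_two_mul {k : ℕ} (hk : k ≠ 0) : sumStep (2 * k) = 2 * sumStep k := by
  have := two_pow_rmb_le hk
  rw [sumStep, sumStep, rmb_two_mul hk, pow_succ]
  omega

lemma sumStep_two_mul_add_one (k : ℕ) : sumStep (2 * k + 1) = 2 * k := by
  rw [sumStep, rmb_two_mul_add_one]
  rfl

lemma popcount_sumStep_add_one {x : ℕ} (hx : x ≠ 0) : popcount (sumStep x) + 1 = popcount x := by
  induction x using Nat.strong_induction_on with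
  | _ x ih =>
    obtain ⟨k, rfl | rfl⟩ := Nat.even_or_odd' x
    · have hk : k ≠ 0 := by omega
      rw [sumStep_two_mul hk, popcount_two_mul, popcount_two_mul, ih k (by omega) hk]
    · rw [sumStep_two_mul_add_one, popcount_two_mul, popcount_two_mul_add_one]

lemma sumSeq_succ (i j : ℕ) : sumSeq i (j + 1) = sumStep (sumSeq i j) :=
  Function.iterate_succ_apply' sumStep j i

lemma sumSeq_antitone (i : ℕ) : Antitone (sumSeq i) :=
  antitone_nat_of_succ_le fun j => by rw [sumSeq_succ]; exact Nat.sub_le _ _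

lemma sumSeq_popcount (x : ℕ) : sumSeq x (popcount x) = 0 := by
  induction x using Nat.strong_induction_on with
  | _ x ih =>
    rcases eq_or_ne x 0 with rfl | hx
    · rfl
    · rw [← popcount_sumStep_add_one hx, sumSeq, Function.iterate_succ_apply]
      exact ih _ (sumStep_lt hx)

theorem fenwick_ranges_partition_general (i : ℕ) :
    (∀ j₁ < popcount i, ∀ j₂ < popcount i, j₁ ≠ j₂ →
        Disjoint (Finset.Ioc (sumSeq i (j₁ + 1)) (sumSeq i j₁))
          (Finset.Ioc (sumSeq i (j₂ + 1)) (sumSeq i j₂))) ∧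
      (Finset.range (popcount i)).biUnion
          (fun j => Finset.Ioc (sumSeq i (j + 1)) (sumSeq i j)) = Finset.Icc 1 i := by
  refine ⟨fun j₁ _ j₂ _ hne => (sumSeq_antitone i).disjoint_Ioc_succ_of_ne hne, ?_⟩
  rw [(sumSeq_antitone i).biUnion_range_Ioc_succ, sumSeq_popcount]
  exact (Icc_add_one_left_eq_Ioc 0 i).symm

theorem fenwick_ranges_partition (i : ℕ) (hi : 0 < i) :
    (∀ j₁ < popcount i, ∀ j₂ < popcount i, j₁ ≠ j₂ →
        Disjoint (Finset.Ioc (sumSeq i (j₁ + 1)) (sumSeq i j₁))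
          (Finset.Ioc (sumSeq i (j₂ + 1)) (sumSeq i j₂))) ∧
      (Finset.range (popcount i)).biUnion
          (fun j => Finset.Ioc (sumSeq i (j + 1)) (sumSeq i j)) = Finset.Icc 1 i :=
  fenwick_ranges_partition_general i
end

section
/- Let n be a power of two, 1 ≤ i ≤ n, and let u 0 = i, u (j+1) = u j + 2^(rmb (u j)) be the update sequence of i, terminating at the first index t with u t = 2n. Then for every index k with 1 ≤ k ≤ n, the Fenwick range of k contains i (i.e., k - 2^(rmb k) < i ≤ k) if and only if k appears among u 0, u 1, ..., u (t-1) restricted to values ≤ n. -/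
lemma rmb_dvd (x : ℕ) : 2 ^ rmb x ∣ x := pow_padicValNat_dvd

lemma lt_updStep (x : ℕ) : x < updStep x :=
  Nat.lt_add_of_pos_right (pow_pos two_pos _)

lemma two_pow_succ_dvd_add {v x : ℕ} (h1 : 2 ^ v ∣ x) (h2 : ¬ 2 ^ (v + 1) ∣ x) :
    2 ^ (v + 1) ∣ x + 2 ^ v := by
  obtain ⟨m, rfl⟩ := h1
  have hodd : ¬ 2 ∣ m := by
    rintro ⟨c, rfl⟩
    exact h2 ⟨c, by ring⟩
  obtain ⟨c, hc⟩ : 2 ∣ m + 1 := by omega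
  exact ⟨c, by rw [show 2 ^ v * m + 2 ^ v = 2 ^ v * (m + 1) by ring, hc]; ring⟩

lemma rmb_updStep_lt {x : ℕ} (hx : x ≠ 0) : rmb x < rmb (updStep x) := by
  haveI : Fact (Nat.Prime 2) := ⟨Nat.prime_two⟩
  have hne : updStep x ≠ 0 := by have := lt_updStep x; omega
  have h := two_pow_succ_dvd_add (v := rmb x) (x := x) pow_padicValNat_dvd
    (pow_succ_padicValNat_not_dvd hx)
  have h2 := (padicValNat_dvd_iff_le (p := 2) hne).mp h
  show rmb x < padicValNat 2 (updStep x)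
  omega

lemma updSeq_succ (i j : ℕ) : updSeq i (j + 1) = updStep (updSeq i j) :=
  Function.iterate_succ_apply' _ _ _

lemma le_updSeq (i j : ℕ) : i ≤ updSeq i j := by
  induction j with
  | zero => rfl
  | succ j ih => rw [updSeq_succ]; exact ih.trans (lt_updStep _).le

lemma updSeq_strictMono (i : ℕ) (h1 : 1 ≤ i) : StrictMono (updSeq i) :=
  strictMono_nat_of_lt_succ fun j => by rw [updSeq_succ]; exact lt_updStep _

/-- Invariant: every element of the update sequence has `i` in its range. -/
lemma updSeq_range (i : ℕ) (h1 : 1 ≤ i) (j : ℕ) :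
    updSeq i j - 2 ^ rmb (updSeq i j) < i ∧ i ≤ updSeq i j := by
  induction j with
  | zero =>
    refine ⟨?_, le_refl i⟩
    have : 0 < 2 ^ rmb i := pow_pos two_pos _
    show i - 2 ^ rmb i < i
    omega
  | succ j ih =>
    obtain ⟨ih1, ih2⟩ := ih
    set x := updSeq i j with hx
    have hxne : x ≠ 0 := by omega
    have hlt := rmb_updStep_lt hxne
    have hpow : 2 ^ (rmb x + 1) ≤ 2 ^ rmb (updStep x) :=
      Nat.pow_le_pow_right (by norm_num) hlt
    rw [updSeq_succ, ← hx]
    constructor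
    · show updStep x - 2 ^ rmb (updStep x) < i
      have : updStep x = x + 2 ^ rmb x := rfl
      have h2 : 2 ^ (rmb x + 1) = 2 ^ rmb x + 2 ^ rmb x := by ring
      omega
    · exact ih2.trans (lt_updStep x).le

theorem fenwick_range_mem_iff_updSeq (n i t : ℕ) (hn : ∃ h, n = 2 ^ h)
    (h1 : 1 ≤ i) (h2 : i ≤ n)
    (ht : updSeq i t = 2 * n) (htmin : ∀ j < t, updSeq i j < 2 * n) :
    ∀ k, 1 ≤ k → k ≤ n →
      ((k - 2 ^ rmb k < i ∧ i ≤ k) ↔ ∃ j < t, updSeq i j = k) := by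
  intro k hk1 hkn
  constructor
  · rintro ⟨hlo, hhi⟩
    -- find minimal j with k < updSeq i j
    have hP : ∃ j, k < updSeq i j := ⟨t, by omega⟩
    classical
    have hPj : k < updSeq i (Nat.find hP) := Nat.find_spec hP
    have hj0 : Nat.find hP ≠ 0 := by
      intro h
      rw [h] at hPj
      have h0 : updSeq i 0 = i := rfl
      omega
    obtain ⟨j', hj'⟩ : ∃ j', Nat.find hP = j' + 1 := ⟨Nat.find hP - 1, by omega⟩
    rw [hj'] at hPj
    have hle : updSeq i j' ≤ k := by
      have := Nat.find_min hP (m := j') (by omega)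
      omega
    set x := updSeq i j' with hxdef
    have hix : i ≤ x := le_updSeq i j'
    have hxk : k < updStep x := by rwa [updSeq_succ] at hPj
    have hxdvd : 2 ^ rmb x ∣ x := rmb_dvd x
    have hkdvd : 2 ^ rmb k ∣ k := rmb_dvd k
    have hxk_eq : x = k := by
      rcases le_or_gt (rmb x) (rmb k) with hc | hc
      · -- 2^(rmb x) ∣ k, k - x < 2^(rmb x)
        have hdk : 2 ^ rmb x ∣ k := dvd_trans (pow_dvd_pow 2 hc) hkdvd
        have hd : 2 ^ rmb x ∣ k - x := Nat.dvd_sub hdk hxdvd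
        have hsmall : k - x < 2 ^ rmb x := by
          have : updStep x = x + 2 ^ rmb x := rfl
          omega
        have := Nat.eq_zero_of_dvd_of_lt hd (by omega) |>.symm
        · omega
      · -- 2^(rmb k) ∣ x, k - x < 2^(rmb k)
        have hdx : 2 ^ rmb k ∣ x := dvd_trans (pow_dvd_pow 2 hc.le) hxdvd
        have hd : 2 ^ rmb k ∣ k - x := Nat.dvd_sub hkdvd hdx
        have hsmall : k - x < 2 ^ rmb k := by omega
        rcases Nat.eq_zero_or_pos (k - x) with h0 | hpos
        · omega
        · exact absurd hsmall (not_lt.mpr (Nat.le_of_dvd hpos hd)).elim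
    have hj't : j' < t := by
      by_contra h
      push_neg at h
      have : updSeq i t ≤ updSeq i j' := (updSeq_strictMono i h1).monotone h
      omega
    exact ⟨j', hj't, hxk_eq⟩
  · rintro ⟨j, hjt, rfl⟩
    exact updSeq_range i h1 j
end
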